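/- For every formal context K = (G,M,I) one can construct a complete many-valued context K_W (with the same attribute set M) such that for all X, Y ⊆ M the implication X → Y holds in K if and only if Y is functionally dependent on X in K_W. -/

import Mathlib

universe u v

def extentOf {G M : Type*} (I : G → M → Prop) (B : Set M) : Set G :=
  {g | ∀ m ∈ B, I g m}

/-- The implication `A → B` holds in the context `(G,M,I)` if `A′ ⊆ B′`. -/
def ImpHolds {G M : Type*} (I : G → M → Prop) (A B : Set M) : Prop :=
  extentOf I A ⊆ extentOf I B

/-- `Y` is functionally dependent on `X` in the complete many-valued context `(H,M,W,f)`. -/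
def FunDep {H M W : Type*} (f : H → M → W) (X Y : Set M) : Prop :=
  ∀ g h : H, (∀ m ∈ X, f g m = f h m) → ∀ n ∈ Y, f g n = f h n

/-!
Scale the context by letting each object `g` take its own name as value at the attributes it
lacks and a common value at the attributes it has, and add one more object whose row is that
common value throughout. Two distinct rows agree on `X` only where both take the common value,
i.e. only if both objects lie in `X′` (the extra object lying in every extent). So `Y` depends
on `X` iff every object of `X′` has the common value on `Y`, which is `X′ ⊆ Y′`.
-/

open Classical in
/-- The value `none` stands for the common value; the extra object is `none`. -/
noncomputable def dependencyContext {G M : Type*} (I : G → M → Prop) :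
    Option G → M → Option G
  | none, _ => none
  | some g, m => if I g m then none else some g

namespace dependencyContext

variable {G M : Type*} {I : G → M → Prop}

theorem eq_none_iff {a : Option G} {m : M} :
    dependencyContext I a m = none ↔ ∀ g ∈ a, I g m := by
  cases a with
  | none => simp [dependencyContext]
  | some g => by_cases h : I g m <;> simp [dependencyContext, h]

theorem eq_of_eq_some {a : Option G} {m : M} {x : G} (h : dependencyContext I a m = some x) :
    a = some x := by
  cases a with
  | none => simp [dependencyContext] at h
  | some g =>
    by_cases hI : I g m
    · simp [dependencyContext, hI] at h
    · simpa [dependencyContext, hI] using h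

theorem eq_none_on_iff {a : Option G} {X : Set M} :
    (∀ m ∈ X, dependencyContext I a m = none) ↔ ∀ g ∈ a, g ∈ extentOf I X := by
  simp only [eq_none_iff]
  exact ⟨fun h g hg m hm => h m hm g hg, fun h m hm g hg => h g hg m hm⟩

theorem eq_none_on_of_impHolds {a : Option G} {X Y : Set M} (hXY : ImpHolds I X Y)
    (ha : ∀ m ∈ X, dependencyContext I a m = none) :
    ∀ m ∈ Y, dependencyContext I a m = none :=
  eq_none_on_iff.2 fun g hg => hXY (eq_none_on_iff.1 ha g hg)

theorem eq_none_of_agree_of_ne {a b : Option G} {m : M} (hne : a ≠ b)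
    (hab : dependencyContext I a m = dependencyContext I b m) :
    dependencyContext I a m = none := by
  cases hx : dependencyContext I a m with
  | none => rfl
  | some x => exact absurd ((eq_of_eq_some hx).trans (eq_of_eq_some (hab ▸ hx)).symm) hne

theorem eq_or_eq_none_on_of_agree {a b : Option G} {X : Set M}
    (hab : ∀ m ∈ X, dependencyContext I a m = dependencyContext I b m) :
    a = b ∨ (∀ m ∈ X, dependencyContext I a m = none) ∧
      ∀ m ∈ X, dependencyContext I b m = none := by
  by_cases hne : a = b
  · exact .inl hne
  have ha : ∀ m ∈ X, dependencyContext I a m = none :=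
    fun m hm => eq_none_of_agree_of_ne hne (hab m hm)
  exact .inr ⟨ha, fun m hm => (hab m hm).symm.trans (ha m hm)⟩

end dependencyContext

open dependencyContext in
/-- For every formal context `(G,M,I)` one can construct a complete many-valued context
(with the same attribute set `M`) such that an implication `X → Y` holds in `(G,M,I)` iff
`Y` is functionally dependent on `X` in the many-valued context. -/
theorem implication_iff_funDep_of_constructed_context {G : Type u} {M : Type v}
    (I : G → M → Prop) :
    ∃ (H : Type u) (W : Type u) (f : H → M → W),
      ∀ X Y : Set M, ImpHolds I X Y ↔ FunDep f X Y := by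
  refine ⟨Option G, Option G, dependencyContext I, fun X Y => ⟨fun hXY => ?_, fun hdep => ?_⟩⟩
  · intro a b hab n hn
    rcases eq_or_eq_none_on_of_agree hab with rfl | ⟨ha, hb⟩
    · rfl
    · rw [eq_none_on_of_impHolds hXY ha n hn, eq_none_on_of_impHolds hXY hb n hn]
  · intro g hg
    have hagree : ∀ m ∈ X, dependencyContext I (some g) m = dependencyContext I none m :=
      eq_none_on_iff.2 fun _ h => Option.mem_some_iff.1 h ▸ hg
    exact eq_none_on_iff.1 (hdep _ _ hagree) g rfl
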